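/- (Theorem 4.2, matrix operators are the bounded operators.) Let A : ℕ → ℕ → K be an infinite matrix such that (M1) for every n, Tendsto (fun m => A m n) atTop (nhds 0) (each column tends to 0), and (M2) there exists C : ℝ with ‖A m n‖ ≤ C for all m, n (bounded entries). Then there exists a unique continuous K-linear operator T : H →L[K] H with (T (e n)) m = A m n for all m, n : ℕ. -/

import Mathlib

open Filter

noncomputable section

variable (K : Type*) [NontriviallyNormedField K] [IsUltrametricDist K]
  [CompleteSpace K] [StarRing K] [NormedStarGroup K]

/-- The p-adic coordinate Hilbert space: zero-convergent sequences in `K` with sup norm. -/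
abbrev H := ZeroAtInftyContinuousMap ℕ K

/-- The standard basis vectors of `H K`. -/
def e (n : ℕ) : H K where
  toFun := fun m => if m = n then 1 else 0
  continuous_toFun := continuous_of_discreteTopology
  zero_at_infty' := by
    rw [Filter.cocompact_eq_cofinite, Nat.cofinite_eq_atTop]
    refine Filter.Tendsto.congr' ?_ tendsto_const_nhds
    filter_upwards [Filter.eventually_gt_atTop n] with m hm
    simp [Nat.ne_of_gt hm]

/-- The canonical inner product on `H K`: `⟪x, y⟫ = ∑' i, star (x i) * y i`. -/
def inner' (x y : H K) : K := ∑' i, star (x i) * y i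

/-- A bounded operator is of trace class if its matrix entries vanish along the
cofinite filter of `ℕ × ℕ`. -/
def IsTraceClass (T : H K →L[K] H K) : Prop :=
  Tendsto (fun q : ℕ × ℕ => (T (e K q.2)) q.1) Filter.cofinite (nhds 0)

/-! In an ultrametric Banach space a series converges as soon as its terms tend to zero, and the
norm of its sum is bounded by the supremum of the norms of its terms. Hence, for columns
`a n ∈ H` of bounded norm, `x ↦ ∑ n, x n • a n` is a bounded operator sending `e n` to `a n`.
Uniqueness holds because every `x ∈ H` is the sum of the convergent series `∑ n, x n • e n`. -/

open scoped Topology ZeroAtInfty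

namespace ZeroAtInftyContinuousMap

section Discrete

variable {α E : Type*} [TopologicalSpace α] [DiscreteTopology α] [TopologicalSpace E] [Zero E]

lemma tendsto_cofinite_zero (f : C₀(α, E)) : Tendsto f cofinite (𝓝 0) := by
  simpa only [cocompact_eq_cofinite] using zero_at_infty f

def ofTendsto (f : ℕ → E) (hf : Tendsto f atTop (𝓝 0)) : C₀(ℕ, E) where
  toFun := f
  continuous_toFun := continuous_of_discreteTopology
  zero_at_infty' := by rwa [cocompact_eq_cofinite, Nat.cofinite_eq_atTop]

end Discrete

variable {α E : Type*} [TopologicalSpace α] [NormedAddCommGroup E]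

lemma norm_apply_le (f : C₀(α, E)) (x : α) : ‖f x‖ ≤ ‖f‖ := by
  rw [← norm_toBCF_eq_norm]
  exact f.toBCF.norm_coe_le_norm x

lemma norm_le_iff {f : C₀(α, E)} {C : ℝ} (hC : 0 ≤ C) : ‖f‖ ≤ C ↔ ∀ x, ‖f x‖ ≤ C := by
  rw [← norm_toBCF_eq_norm]
  exact BoundedContinuousFunction.norm_le hC

instance [IsUltrametricDist E] : IsUltrametricDist C₀(α, E) :=
  IsUltrametricDist.isUltrametricDist_of_forall_norm_add_le_max_norm fun f g =>
    (norm_le_iff (by positivity)).2 fun x =>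
      (IsUltrametricDist.norm_add_le_max _ _).trans
        (max_le_max (norm_apply_le f x) (norm_apply_le g x))

lemma hasSum_apply {ι : Type*} {f : ι → C₀(α, E)} {s : C₀(α, E)} (h : HasSum f s) (x : α) :
    HasSum (fun i => f i x) (s x) :=
  h.map (AddMonoidHom.mk' (fun g : C₀(α, E) => g x) fun _ _ => rfl)
    ((continuous_eval_const x).comp isometry_toBCF.continuous)

end ZeroAtInftyContinuousMap

section CoordinateSpace

variable {𝕜 : Type*} [NontriviallyNormedField 𝕜]

open ZeroAtInftyContinuousMap

lemma e_apply (n m : ℕ) : e 𝕜 n m = if m = n then 1 else 0 :=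
  rfl

lemma norm_e_le_one (n : ℕ) : ‖e 𝕜 n‖ ≤ 1 :=
  (norm_le_iff zero_le_one).2 fun m => by rw [e_apply]; split_ifs <;> simp

variable {F : Type*} [NormedAddCommGroup F] [NormedSpace 𝕜 F] [IsUltrametricDist F]
  [CompleteSpace F]

lemma summable_smul_of_norm_le (x : H 𝕜) {a : ℕ → F} {C : ℝ} (ha : ∀ n, ‖a n‖ ≤ C) :
    Summable fun n => x n • a n := by
  refine NonarchimedeanAddGroup.summable_of_tendsto_cofinite_zero <|
    squeeze_zero_norm (fun n => (norm_smul_le _ _).trans ?_)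
      (by simpa using (tendsto_cofinite_zero x).norm.mul_const C)
  exact mul_le_mul_of_nonneg_left (ha n) (norm_nonneg _)

def synthesisCLM (a : ℕ → F) (C : ℝ) (ha : ∀ n, ‖a n‖ ≤ C) : H 𝕜 →L[𝕜] F :=
  LinearMap.mkContinuous
    { toFun := fun x => ∑' n, x n • a n
      map_add' := fun x y => by
        simp only [coe_add, Pi.add_apply, add_smul]
        exact (summable_smul_of_norm_le x ha).tsum_add (summable_smul_of_norm_le y ha)
      map_smul' := fun c x => by
        simp only [coe_smul, Pi.smul_apply, smul_eq_mul, mul_smul, RingHom.id_apply]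
        exact (summable_smul_of_norm_le x ha).tsum_const_smul c }
    C fun x => by
      have hC : 0 ≤ C := (norm_nonneg _).trans (ha 0)
      refine IsUltrametricDist.norm_tsum_le_of_forall_le_of_nonneg (by positivity) fun n => ?_
      calc ‖x n • a n‖ ≤ ‖x‖ * C := (norm_smul_le _ _).trans
            (mul_le_mul (norm_apply_le x n) (ha n) (norm_nonneg _) (norm_nonneg _))
        _ = C * ‖x‖ := mul_comm _ _

lemma synthesisCLM_apply (a : ℕ → F) (C : ℝ) (ha : ∀ n, ‖a n‖ ≤ C) (x : H 𝕜) :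
    synthesisCLM a C ha x = ∑' n, x n • a n :=
  rfl

lemma synthesisCLM_e (a : ℕ → F) (C : ℝ) (ha : ∀ n, ‖a n‖ ≤ C) (n : ℕ) :
    synthesisCLM a C ha (e 𝕜 n) = a n := by
  rw [synthesisCLM_apply, tsum_eq_single n fun k hk => by simp [e_apply, hk]]
  simp [e_apply]

variable [IsUltrametricDist 𝕜] [CompleteSpace 𝕜]

lemma hasSum_smul_e (x : H 𝕜) : HasSum (fun n => x n • e 𝕜 n) x := by
  have hs := (summable_smul_of_norm_le x (a := e 𝕜) norm_e_le_one).hasSum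
  suffices h : ∑' n, x n • e 𝕜 n = x by rwa [h] at hs
  ext m
  have hm : HasSum (fun n => (x n • e 𝕜 n) m) (x m) := by
    convert hasSum_ite_eq m (x m) using 2 with n
    by_cases h : n = m <;> simp [e_apply, h, Ne.symm]
  exact (hasSum_apply hs m).unique hm

lemma ContinuousLinearMap.ext_e {M : Type*} [TopologicalSpace M] [AddCommMonoid M] [Module 𝕜 M]
    [T2Space M] {T T' : H 𝕜 →L[𝕜] M} (h : ∀ n, T (e 𝕜 n) = T' (e 𝕜 n)) : T = T' :=
  ContinuousLinearMap.ext fun x =>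
    ((hasSum_smul_e x).mapL T).unique (by simpa only [map_smul, h] using (hasSum_smul_e x).mapL T')

end CoordinateSpace

/-- An infinite matrix with zero-convergent columns and bounded entries determines a
unique bounded operator on `H`. -/
theorem stmt3 (A : ℕ → ℕ → K)
    (h1 : ∀ n : ℕ, Tendsto (fun m => A m n) atTop (nhds 0))
    (h2 : ∃ C : ℝ, ∀ m n : ℕ, ‖A m n‖ ≤ C) :
    ∃! T : H K →L[K] H K, ∀ m n : ℕ, (T (e K n)) m = A m n := by
  obtain ⟨C, hC⟩ := h2
  let col : ℕ → H K := fun n => ZeroAtInftyContinuousMap.ofTendsto (A · n) (h1 n)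
  have hcol : ∀ n, ‖col n‖ ≤ C := fun n =>
    (ZeroAtInftyContinuousMap.norm_le_iff ((norm_nonneg _).trans (hC 0 0))).2 fun m => hC m n
  refine ⟨synthesisCLM col C hcol, fun m n => by rw [synthesisCLM_e]; rfl, fun T hT => ?_⟩
  refine ContinuousLinearMap.ext_e fun n => ?_
  rw [synthesisCLM_e]
  ext m
  exact hT m n
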